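/- Every set function φ : 2^J → ℝ over a finite set J with φ(∅) = 0 can be written as the difference φ = φ_1 − φ_2 of two infinite-alternating set functions φ_1, φ_2 : 2^J → ℝ. -/

import Mathlib

noncomputable def altSum {J : Type*} (φ : Set J → ℝ) (A₀ : Set J) {k : ℕ}
    (A : Fin k → Set J) : ℝ :=
  ∑ K : Finset (Fin k), (-1 : ℝ) ^ K.card * φ (A₀ ∪ ⋃ i ∈ K, A i)

/-- `φ` is infinite-alternating. -/
def InfAlt {J : Type*} (φ : Set J → ℝ) : Prop :=
  φ ∅ = 0 ∧ ∀ (k : ℕ), 1 ≤ k → ∀ (A₀ : Set J) (A : Fin k → Set J),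
    altSum φ A₀ A ≤ 0

/-!
The hitting functions `X ↦ [X ∩ S ≠ ∅]` are infinite-alternating: the indicator that
`A₀ ∪ ⋃ i ∈ K, A i` misses `S` is a product of indicators, so the alternating sum of a hitting
function collapses to `-[A₀ misses S] * ∏ i, (1 - [Aᵢ misses S]) ≤ 0`. Nonnegative combinations
of infinite-alternating functions are infinite-alternating, and every `φ` with `φ ∅ = 0` is a
real combination of hitting functions of subsets of `J`: this is Möbius inversion of
`T ↦ φ J - φ (J \ T)` over the subset lattice. Splitting the coefficients into positive and
negative parts gives the two functions.
-/

open Finset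

lemma sum_neg_one_pow_card_mul_prod {ι R : Type*} [Fintype ι] [CommRing R] (z : ι → R) :
    ∑ K : Finset ι, (-1) ^ #K * ∏ i ∈ K, z i = ∏ i, (1 - z i) := by
  classical
  simp [prod_sub, powerset_univ]

lemma exists_sum_powerset_eq {α K : Type*} [Fintype α] [Field K] (f : Finset α → K) :
    ∃ a : Finset α → K, ∀ T, ∑ S ∈ T.powerset, a S = f T := by
  classical
  -- The zeta transform is unitriangular, so injective, so surjective in finite dimension.
  let zeta : (Finset α → K) →ₗ[K] (Finset α → K) :=
    LinearMap.pi fun T => ∑ S ∈ T.powerset, LinearMap.proj S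
  have zeta_apply (a : Finset α → K) (T : Finset α) : zeta a T = ∑ S ∈ T.powerset, a S := by
    simp [zeta]
  have zeta_injective : Function.Injective zeta := by
    refine (injective_iff_map_eq_zero zeta).2 fun a ha => funext fun T => ?_
    induction T using Finset.strongInduction with
    | H T ih =>
      have hT := congrFun ha T
      rw [zeta_apply, ← add_sum_erase _ _ (mem_powerset_self T),
        sum_eq_zero fun S hS => ih S ?_] at hT
      · simpa using hT
      · obtain ⟨hne, hsub⟩ := mem_erase.1 hS
        exact ssubset_of_subset_of_ne (mem_powerset.1 hsub) hne
  obtain ⟨a, ha⟩ := LinearMap.injective_iff_surjective.1 zeta_injective f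
  exact ⟨a, fun T => by rw [← zeta_apply, ha]⟩

section SetFunctions

variable {J : Type*}

section Cone

variable {k : ℕ} (A₀ : Set J) (A : Fin k → Set J)

lemma altSum_const_mul (c : ℝ) (φ : Set J → ℝ) :
    altSum (fun X => c * φ X) A₀ A = c * altSum φ A₀ A := by
  simp only [altSum, mul_sum, mul_left_comm]

lemma altSum_sum {ι : Type*} (s : Finset ι) (φ : ι → Set J → ℝ) :
    altSum (fun X => ∑ i ∈ s, φ i X) A₀ A = ∑ i ∈ s, altSum (φ i) A₀ A := by
  simp only [altSum, mul_sum]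
  exact sum_comm

end Cone

namespace InfAlt

lemma const_mul {φ : Set J → ℝ} (hφ : InfAlt φ) {c : ℝ} (hc : 0 ≤ c) :
    InfAlt (fun X => c * φ X) :=
  ⟨by simp [hφ.1], fun k hk A₀ A => by
    rw [altSum_const_mul]; exact mul_nonpos_of_nonneg_of_nonpos hc (hφ.2 k hk A₀ A)⟩

lemma sum {ι : Type*} {s : Finset ι} {φ : ι → Set J → ℝ} (hφ : ∀ i ∈ s, InfAlt (φ i)) :
    InfAlt (fun X => ∑ i ∈ s, φ i X) :=
  ⟨sum_eq_zero fun i hi => (hφ i hi).1, fun k hk A₀ A => by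
    rw [altSum_sum]; exact sum_nonpos fun i hi => (hφ i hi).2 k hk A₀ A⟩

end InfAlt

section Hitting

open Classical in
noncomputable def missing (S X : Set J) : ℝ := if Disjoint X S then 1 else 0

noncomputable def hitting (S X : Set J) : ℝ := 1 - missing S X

variable (S : Set J)

lemma missing_nonneg (X : Set J) : 0 ≤ missing S X := by
  unfold missing; split_ifs <;> norm_num

lemma missing_le_one (X : Set J) : missing S X ≤ 1 := by
  unfold missing; split_ifs <;> norm_num

lemma missing_union_biUnion {ι : Type*} (A₀ : Set J) (A : ι → Set J) (K : Finset ι) :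
    missing S (A₀ ∪ ⋃ i ∈ K, A i) = missing S A₀ * ∏ i ∈ K, missing S (A i) := by
  classical
  simp only [missing, prod_boole, Set.disjoint_union_left, Set.disjoint_iUnion₂_left, ite_and]
  split_ifs <;> simp_all

lemma altSum_hitting {k : ℕ} (hk : k ≠ 0) (A₀ : Set J) (A : Fin k → Set J) :
    altSum (hitting S) A₀ A = -(missing S A₀ * ∏ i, (1 - missing S (A i))) := by
  have hsigns : ∑ K : Finset (Fin k), (-1 : ℝ) ^ #K = 0 := by
    simpa [hk] using sum_neg_one_pow_card_mul_prod fun _ : Fin k => (1 : ℝ)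
  simp only [altSum, hitting, missing_union_biUnion, mul_sub, mul_one, sum_sub_distrib,
    mul_left_comm _ (missing S A₀), ← mul_sum, sum_neg_one_pow_card_mul_prod]
  rw [hsigns, zero_sub]

lemma infAlt_hitting : InfAlt (hitting S) := by
  refine ⟨by simp [hitting, missing], fun k hk A₀ A => ?_⟩
  rw [altSum_hitting S (by omega)]
  exact neg_nonpos.2 <| mul_nonneg (missing_nonneg S A₀) <|
    prod_nonneg fun i _ => sub_nonneg.2 (missing_le_one S (A i))

end Hitting

lemma sum_mul_hitting [Fintype J] (a : Finset J → ℝ) (X : Set J) [Fintype ↑Xᶜ] :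
    ∑ S, a S * hitting ↑S X = ∑ S, a S - ∑ S ∈ Xᶜ.toFinset.powerset, a S := by
  classical
  have hmissing (S : Finset J) : missing ↑S X = if S ∈ Xᶜ.toFinset.powerset then 1 else 0 := by
    simp only [missing, mem_powerset, Set.subset_toFinset, Set.subset_compl_iff_disjoint_left]
  simp only [hitting, hmissing, mul_sub, mul_one, mul_boole, sum_sub_distrib, sum_ite_mem,
    univ_inter]

end SetFunctions

/-- Every set function over a finite domain with `φ(∅) = 0` is the difference of
two infinite-alternating set functions. -/
theorem stmt11 {J : Type*} [Finite J] (φ : Set J → ℝ) (h0 : φ ∅ = 0) :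
    ∃ φ₁ φ₂ : Set J → ℝ, InfAlt φ₁ ∧ InfAlt φ₂ ∧ ∀ X : Set J, φ X = φ₁ X - φ₂ X := by
  have := Fintype.ofFinite J
  classical
  obtain ⟨a, ha⟩ := exists_sum_powerset_eq fun T : Finset J => φ Set.univ - φ (↑T)ᶜ
  refine ⟨fun X => ∑ S, (a S)⁺ * hitting ↑S X, fun X => ∑ S, (a S)⁻ * hitting ↑S X,
    InfAlt.sum fun S _ => (infAlt_hitting (S : Set J)).const_mul (posPart_nonneg (a S)),
    InfAlt.sum fun S _ => (infAlt_hitting (S : Set J)).const_mul (negPart_nonneg (a S)),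
    fun X => ?_⟩
  calc φ X = ∑ S, a S * hitting ↑S X := by
        rw [sum_mul_hitting, ← powerset_univ, ha, ha]
        simp [h0]
    _ = _ := by simp only [← sum_sub_distrib, ← sub_mul, posPart_sub_negPart]
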